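/- Let e_m ≥ 0 and r_m ≥ 0 be sequences, L > 0, 0 < ρ < 1, C > 0, and suppose for a given m: (i) r_{m+1} ≤ ρ·r_m + L·(e_m² - e_{m+1}²), (ii) e_m² ≤ C·r_m, and (iii) e_{m+1} ≤ e_m. Then with β = (1-ρ)/(1+C·L) and ε = 1 - β = (C·L+ρ)/(C·L+1), one has e_{m+1}² + (1/L)·r_{m+1} ≤ ε·(e_m² + (1/L)·r_m). -/

import Mathlib

theorem stmt5 (e e' r r' L ρ C : ℝ) (he : 0 ≤ e) (he' : 0 ≤ e') (hr : 0 ≤ r) (hr' : 0 ≤ r')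
    (hL : 0 < L) (hρ0 : 0 < ρ) (hρ1 : ρ < 1) (hC : 0 < C)
    (h1 : r' ≤ ρ * r + L * (e ^ 2 - e' ^ 2))
    (h2 : e ^ 2 ≤ C * r) (h3 : e' ≤ e) :
    e' ^ 2 + (1 / L) * r' ≤ (C * L + ρ) / (C * L + 1) * (e ^ 2 + (1 / L) * r) := by
  have hden : 0 < C * L + 1 := by positivity
  have key : L * e' ^ 2 + r' ≤ L * e ^ 2 + ρ * r := by nlinarith
  have step : e' ^ 2 + (1 / L) * r' ≤ e ^ 2 + ρ * ((1 / L) * r) := by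
    rw [← sub_nonneg]
    have : e ^ 2 + ρ * (1 / L * r) - (e' ^ 2 + 1 / L * r')
        = (L * e ^ 2 + ρ * r - (L * e' ^ 2 + r')) / L := by field_simp
    rw [this]
    exact div_nonneg (by linarith) hL.le
  refine step.trans ?_
  have h2' : e ^ 2 ≤ C * L * ((1 / L) * r) := by
    have : C * L * ((1 / L) * r) = C * r := by field_simp
    rw [this]
    exact h2
  set s := (1 / L) * r with hs
  have hsnn : 0 ≤ s := by positivity
  rw [div_mul_eq_mul_div, le_div_iff₀ hden]
  nlinarith [mul_le_mul_of_nonneg_left h2' (le_of_lt (by linarith : (0:ℝ) < 1 - ρ))]
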